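/- arXiv:1409.5044 — 5 statements merged into one kernel-verified Lean document; each statement's English description precedes it below -/
import Mathlib

section
/- Let k be a field, n ∈ ℕ, let C₀ ⊆ ℝⁿ be any subset, and let f₁,…,f_r be nonzero Laurent polynomials in n variables over k. Then every fᵢ (i = 1,…,r) is C₀-balanced if and only if the product f₁⋯f_r is C₀-balanced. -/
/-!
Splitting `f = init_ω f + (f - init_ω f)`, with the second summand supported strictly above the
minimal weight `minWeight ω f`, shows that `init_ω` is multiplicative and `minWeight ω` additive
on nonzero polynomials; this gives one direction. Conversely, if `init_ω (∏ f_j) = init_ω' (∏ f_j)`,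
this polynomial is `ω'`-homogeneous of weight `∑ minWeight ω' f_j`, and it is also `∏ init_ω f_j`,
whose largest `ω'`-weight is the sum of the largest `ω'`-weights on the `supp (init_ω f_j)`. Each
of those is at least `minWeight ω' f_j`, so all are equalities: `supp (init_ω f_j)` lies in the
minimal `ω'`-level of `f_j`, i.e. in `supp (init_ω' f_j)`. By symmetry the supports agree, and
both initial forms are restrictions of `f_j`.
-/

noncomputable section

/-- Standard inner product of an integer vector with a real vector. -/
def ipR {n : ℕ} (α : Fin n → ℤ) (ω : Fin n → ℝ) : ℝ := ∑ i, (α i : ℝ) * ω i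

open scoped Classical in
/-- Initial form `init_ω(f)` of a Laurent polynomial `f` in the direction `ω`:
keep exactly the coefficients at those `α ∈ supp f` where `⟨α, ω⟩` attains its
minimum over `supp f`. -/
def initForm {k : Type*} [CommRing k] {n : ℕ} (ω : Fin n → ℝ)
    (f : AddMonoidAlgebra k (Fin n → ℤ)) : AddMonoidAlgebra k (Fin n → ℤ) :=
  AddMonoidAlgebra.ofCoeff
    (Finsupp.filter (fun α => ∀ β ∈ f.coeff.support, ipR α ω ≤ ipR β ω) f.coeff)

/-- `f` is `C`-balanced: `ω ↦ initForm ω f` is constant on `C`. -/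
def IsBalanced {k : Type*} [CommRing k] {n : ℕ} (C : Set (Fin n → ℝ))
    (f : AddMonoidAlgebra k (Fin n → ℤ)) : Prop :=
  ∀ ω ∈ C, ∀ ω' ∈ C, initForm ω f = initForm ω' f

section

variable {k : Type*} {n : ℕ}

lemma ipR_add (α β : Fin n → ℤ) (ω : Fin n → ℝ) : ipR (α + β) ω = ipR α ω + ipR β ω := by
  simp [ipR, add_mul, Finset.sum_add_distrib]

lemma ipR_neg_right (α : Fin n → ℤ) (ω : Fin n → ℝ) : ipR α (-ω) = -ipR α ω := by
  simp [ipR]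

variable [CommRing k]

/-- The tropicalization `trop(f)(ω)` for the trivial valuation on `k`; junk value `0` at `f = 0`. -/
def minWeight (ω : Fin n → ℝ) (f : AddMonoidAlgebra k (Fin n → ℤ)) : ℝ :=
  if h : f.coeff.support.Nonempty then f.coeff.support.inf' h (ipR · ω) else 0

def IsWeightedHomogeneous (ω : Fin n → ℝ) (c : ℝ) (f : AddMonoidAlgebra k (Fin n → ℤ)) : Prop :=
  ∀ α ∈ f.coeff.support, ipR α ω = c

variable {ω : Fin n → ℝ} {c : ℝ} {f g p q : AddMonoidAlgebra k (Fin n → ℤ)} {α : Fin n → ℤ}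

lemma ne_zero_of_mem_support (hα : α ∈ f.coeff.support) : f ≠ 0 := by
  rintro rfl
  simp at hα

lemma minWeight_le (hα : α ∈ f.coeff.support) : minWeight ω f ≤ ipR α ω := by
  rw [minWeight, dif_pos ⟨α, hα⟩]
  exact Finset.inf'_le _ hα

lemma exists_ipR_eq_minWeight (hf : f ≠ 0) :
    ∃ α ∈ f.coeff.support, ipR α ω = minWeight ω f := by
  have hne : f.coeff.support.Nonempty := by simpa using hf
  obtain ⟨α, hα, heq⟩ := Finset.exists_mem_eq_inf' hne (ipR · ω)
  exact ⟨α, hα, by rw [minWeight, dif_pos hne, heq]⟩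

lemma coeff_initForm :
    (initForm ω f).coeff α = if ipR α ω = minWeight ω f then f.coeff α else 0 := by
  rw [initForm, AddMonoidAlgebra.coeff_ofCoeff, Finsupp.filter_apply]
  by_cases hα : α ∈ f.coeff.support
  · obtain ⟨β₀, hβ₀, heq⟩ := exists_ipR_eq_minWeight (ne_zero_of_mem_support hα)
    refine if_congr ⟨fun h => le_antisymm (heq ▸ h β₀ hβ₀) (minWeight_le hα), ?_⟩ rfl rfl
    exact fun h β hβ => h ▸ minWeight_le hβ
  · simp [Finsupp.notMem_support_iff.mp hα]

lemma mem_support_initForm :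
    α ∈ (initForm ω f).coeff.support ↔ α ∈ f.coeff.support ∧ ipR α ω = minWeight ω f := by
  simp [coeff_initForm, and_comm]

lemma support_initForm_subset : (initForm ω f).coeff.support ⊆ f.coeff.support :=
  fun _ hα => (mem_support_initForm.mp hα).1

lemma initForm_ne_zero (hf : f ≠ 0) : initForm ω f ≠ 0 := by
  obtain ⟨α, hα, heq⟩ := exists_ipR_eq_minWeight (ω := ω) hf
  rintro h
  simpa [h] using mem_support_initForm.mpr ⟨hα, heq⟩

lemma initForm_eq_of_support_eq {ω' : Fin n → ℝ}
    (h : (initForm ω f).coeff.support = (initForm ω' f).coeff.support) :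
    initForm ω f = initForm ω' f := by
  ext α
  by_cases hα : α ∈ (initForm ω f).coeff.support
  · have hα' := h ▸ hα
    rw [coeff_initForm, coeff_initForm, if_pos (mem_support_initForm.mp hα).2,
      if_pos (mem_support_initForm.mp hα').2]
  · rw [Finsupp.notMem_support_iff.mp hα, Finsupp.notMem_support_iff.mp (h ▸ hα)]

lemma minWeight_lt_of_mem_support_sub_initForm (hα : α ∈ (f - initForm ω f).coeff.support) :
    minWeight ω f < ipR α ω := by
  rw [AddMonoidAlgebra.coeff_sub, Finsupp.mem_support_iff, Finsupp.sub_apply, coeff_initForm]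
    at hα
  split_ifs at hα with heq
  · simp at hα
  · exact lt_of_le_of_ne (minWeight_le (by simpa using hα)) (Ne.symm heq)

lemma exists_ipR_eq_add_of_mem_support_mul {γ : Fin n → ℤ} (hγ : γ ∈ (p * q).coeff.support) :
    ∃ α ∈ p.coeff.support, ∃ β ∈ q.coeff.support, ipR γ ω = ipR α ω + ipR β ω := by
  obtain ⟨α, hα, β, hβ, rfl⟩ := Finset.mem_add.mp (AddMonoidAlgebra.support_coeff_mul_subset p q hγ)
  exact ⟨α, hα, β, hβ, ipR_add α β ω⟩

lemma isWeightedHomogeneous_initForm : IsWeightedHomogeneous ω (minWeight ω f) (initForm ω f) :=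
  fun _ hα => (mem_support_initForm.mp hα).2

lemma isWeightedHomogeneous_one :
    IsWeightedHomogeneous ω 0 (1 : AddMonoidAlgebra k (Fin n → ℤ)) := by
  intro α hα
  rw [AddMonoidAlgebra.one_def, AddMonoidAlgebra.coeff_single] at hα
  rw [Finset.mem_singleton.mp (Finsupp.support_single_subset hα)]
  simp [ipR]

namespace IsWeightedHomogeneous

lemma neg (hf : IsWeightedHomogeneous ω c f) : IsWeightedHomogeneous (-ω) (-c) f :=
  fun α hα => by rw [ipR_neg_right, hf α hα]

lemma mul {c' : ℝ} (hp : IsWeightedHomogeneous ω c p) (hq : IsWeightedHomogeneous ω c' q) :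
    IsWeightedHomogeneous ω (c + c') (p * q) := by
  intro γ hγ
  obtain ⟨α, hα, β, hβ, heq⟩ := exists_ipR_eq_add_of_mem_support_mul hγ
  rw [heq, hp α hα, hq β hβ]

lemma minWeight_eq (hf : IsWeightedHomogeneous ω c f) (hf0 : f ≠ 0) : minWeight ω f = c := by
  obtain ⟨α, hα, heq⟩ := exists_ipR_eq_minWeight hf0
  rw [← heq, hf α hα]

lemma initForm_eq (hf : IsWeightedHomogeneous ω c f) : initForm ω f = f := by
  ext α
  rw [coeff_initForm]
  by_cases hα : α ∈ f.coeff.support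
  · rw [if_pos (by rw [hf α hα, hf.minWeight_eq (ne_zero_of_mem_support hα)])]
  · simp [Finsupp.notMem_support_iff.mp hα]

end IsWeightedHomogeneous

lemma initForm_one : initForm ω (1 : AddMonoidAlgebra k (Fin n → ℤ)) = 1 :=
  isWeightedHomogeneous_one.initForm_eq

lemma minWeight_initForm (hf : f ≠ 0) : minWeight ω (initForm ω f) = minWeight ω f :=
  isWeightedHomogeneous_initForm.minWeight_eq (initForm_ne_zero hf)

lemma minWeight_neg_initForm (hf : f ≠ 0) : minWeight (-ω) (initForm ω f) = -minWeight ω f :=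
  isWeightedHomogeneous_initForm.neg.minWeight_eq (initForm_ne_zero hf)

lemma initForm_add_of_lt (hp : IsWeightedHomogeneous ω c p) (hp0 : p ≠ 0)
    (hq : ∀ α ∈ q.coeff.support, c < ipR α ω) : initForm ω (p + q) = p := by
  have hqp : ∀ α ∈ p.coeff.support, q.coeff α = 0 := fun α hα =>
    Finsupp.notMem_support_iff.mp fun hα' => (hq α hα').ne' (hp α hα)
  have hmin : minWeight ω (p + q) = c := by
    obtain ⟨α, hα, -⟩ := exists_ipR_eq_minWeight (ω := ω) hp0
    have hα' : α ∈ (p + q).coeff.support := by simpa [hqp α hα] using hα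
    refine le_antisymm ((minWeight_le hα').trans_eq (hp α hα)) ?_
    obtain ⟨β, hβ, heq⟩ := exists_ipR_eq_minWeight (ne_zero_of_mem_support hα')
    rw [← heq]
    rcases Finset.mem_union.mp (Finsupp.support_add hβ) with hβ | hβ
    exacts [(hp β hβ).ge, (hq β hβ).le]
  ext α
  rw [coeff_initForm, hmin, AddMonoidAlgebra.coeff_add, Finsupp.add_apply]
  split_ifs with hα
  · rw [Finsupp.notMem_support_iff.mp fun h => (hq α h).ne' hα, add_zero]
  · exact (Finsupp.notMem_support_iff.mp fun h => hα (hp α h)).symm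

variable [IsDomain k]

lemma minWeight_one : minWeight ω (1 : AddMonoidAlgebra k (Fin n → ℤ)) = 0 :=
  isWeightedHomogeneous_one.minWeight_eq one_ne_zero

lemma initForm_mul (hf : f ≠ 0) (hg : g ≠ 0) :
    initForm ω (f * g) = initForm ω f * initForm ω g := by
  have hsplit : f * g = initForm ω f * initForm ω g +
      (initForm ω f * (g - initForm ω g) + (f - initForm ω f) * g) := by ring
  rw [hsplit]
  refine initForm_add_of_lt (isWeightedHomogeneous_initForm.mul isWeightedHomogeneous_initForm)
    (mul_ne_zero (initForm_ne_zero hf) (initForm_ne_zero hg)) fun γ hγ => ?_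
  rw [AddMonoidAlgebra.coeff_add] at hγ
  rcases Finset.mem_union.mp (Finsupp.support_add hγ) with hγ | hγ
  all_goals obtain ⟨α, hα, β, hβ, heq⟩ := exists_ipR_eq_add_of_mem_support_mul hγ
  · have := isWeightedHomogeneous_initForm α hα
    have := minWeight_lt_of_mem_support_sub_initForm hβ
    linarith
  · have := minWeight_lt_of_mem_support_sub_initForm hα
    have := minWeight_le (ω := ω) hβ
    linarith

lemma minWeight_mul (hf : f ≠ 0) (hg : g ≠ 0) :
    minWeight ω (f * g) = minWeight ω f + minWeight ω g := by
  rw [← minWeight_initForm (mul_ne_zero hf hg), initForm_mul hf hg]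
  exact (isWeightedHomogeneous_initForm.mul isWeightedHomogeneous_initForm).minWeight_eq
    (mul_ne_zero (initForm_ne_zero hf) (initForm_ne_zero hg))

variable {ι : Type*} {s : Finset ι} {F : ι → AddMonoidAlgebra k (Fin n → ℤ)}

lemma initForm_prod (hF : ∀ i ∈ s, F i ≠ 0) :
    initForm ω (∏ i ∈ s, F i) = ∏ i ∈ s, initForm ω (F i) := by
  induction s using Finset.cons_induction with
  | empty => simp [initForm_one]
  | cons a s ha ih =>
    rw [Finset.forall_mem_cons] at hF
    rw [Finset.prod_cons, Finset.prod_cons, initForm_mul hF.1 (Finset.prod_ne_zero_iff.mpr hF.2),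
      ih hF.2]

lemma minWeight_prod (hF : ∀ i ∈ s, F i ≠ 0) :
    minWeight ω (∏ i ∈ s, F i) = ∑ i ∈ s, minWeight ω (F i) := by
  induction s using Finset.cons_induction with
  | empty => simp [minWeight_one]
  | cons a s ha ih =>
    rw [Finset.forall_mem_cons] at hF
    rw [Finset.prod_cons, Finset.sum_cons, minWeight_mul hF.1 (Finset.prod_ne_zero_iff.mpr hF.2),
      ih hF.2]

lemma support_initForm_subset_of_initForm_prod_eq {ω' : Fin n → ℝ} (hF : ∀ i ∈ s, F i ≠ 0)
    (h : initForm ω (∏ i ∈ s, F i) = initForm ω' (∏ i ∈ s, F i)) {i : ι} (hi : i ∈ s) :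
    (initForm ω (F i)).coeff.support ⊆ (initForm ω' (F i)).coeff.support := by
  -- `-minWeight (-ω') p` is the largest `ω'`-weight on `supp p`
  have hle : ∀ j ∈ s, minWeight (-ω') (initForm ω (F j)) ≤ -minWeight ω' (F j) := by
    intro j hj
    obtain ⟨α, hα, -⟩ := exists_ipR_eq_minWeight (ω := ω) (initForm_ne_zero (hF j hj))
    calc minWeight (-ω') (initForm ω (F j)) ≤ ipR α (-ω') := minWeight_le hα
      _ = -ipR α ω' := ipR_neg_right α ω'
      _ ≤ -minWeight ω' (F j) := neg_le_neg (minWeight_le (support_initForm_subset hα))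
  have hsum : ∑ j ∈ s, minWeight (-ω') (initForm ω (F j)) = ∑ j ∈ s, -minWeight ω' (F j) := by
    calc ∑ j ∈ s, minWeight (-ω') (initForm ω (F j))
        = minWeight (-ω') (∏ j ∈ s, initForm ω (F j)) :=
          (minWeight_prod fun j hj => initForm_ne_zero (hF j hj)).symm
      _ = minWeight (-ω') (initForm ω' (∏ j ∈ s, F j)) := by rw [← initForm_prod hF, h]
      _ = -minWeight ω' (∏ j ∈ s, F j) := minWeight_neg_initForm (Finset.prod_ne_zero_iff.mpr hF)
      _ = ∑ j ∈ s, -minWeight ω' (F j) := by rw [minWeight_prod hF, Finset.sum_neg_distrib]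
  have heq := (Finset.sum_eq_sum_iff_of_le hle).mp hsum i hi
  intro α hα
  have hαF := support_initForm_subset hα
  have hαmax := minWeight_le (ω := -ω') hα
  rw [heq, ipR_neg_right] at hαmax
  exact mem_support_initForm.mpr ⟨hαF, le_antisymm (by linarith) (minWeight_le hαF)⟩

end

/-- For nonzero Laurent polynomials `f₁, …, f_r` over a field and an arbitrary
subset `C₀ ⊆ ℝⁿ`, every `fᵢ` is `C₀`-balanced iff the product `f₁ ⋯ f_r` is
`C₀`-balanced. -/
theorem forall_balanced_iff_prod_balanced {k : Type*} [Field k] {n r : ℕ}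
    (C : Set (Fin n → ℝ))
    (f : Fin r → AddMonoidAlgebra k (Fin n → ℤ)) (hf : ∀ i, f i ≠ 0) :
    (∀ i, IsBalanced C (f i)) ↔ IsBalanced C (∏ i, f i) := by
  have hf' : ∀ i ∈ Finset.univ, f i ≠ 0 := fun i _ => hf i
  constructor
  · intro hbal ω hω ω' hω'
    rw [initForm_prod hf', initForm_prod hf']
    exact Finset.prod_congr rfl fun i _ => hbal i ω hω ω' hω'
  · intro hbal i ω hω ω' hω'
    exact initForm_eq_of_support_eq <| subset_antisymm
      (support_initForm_subset_of_initForm_prod_eq hf' (hbal ω hω ω' hω') (Finset.mem_univ i))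
      (support_initForm_subset_of_initForm_prod_eq hf' (hbal ω' hω' ω hω) (Finset.mem_univ i))
end
end

section
/- Let k be a field and f₁,…,f_r nonzero Laurent polynomials in n variables over k. Let N be the Newton polytope of f₁⋯f_r (equivalently, the Minkowski sum of the Newton polytopes of the fᵢ) and d = dim(N), the dimension of the affine span of N. For each i choose αᵢ ∈ supp(fᵢ). Then there exists a matrix A ∈ GLₙ(ℤ) such that for every i and every β ∈ supp(fᵢ), the vector (β − αᵢ)·A lies in ℤ^d × {0}^{n−d}; equivalently, the Laurent polynomial (X^{−αᵢ} fᵢ)^A involves only the first d variables, where GLₙ(ℤ) acts on Laurent polynomials by (X^α)^A := X^{αA}. -/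
/-!
A linear functional `φ` vanishing on the direction `W` of the Newton polytope of `∏ fᵢ` is
constant on `supp (∏ fᵢ)`. The `φ`-maximal (resp. minimal) point of the support of a product is
the sum of those of the factors, so the spreads `max φ - min φ` over the factors add up to `0`
and `φ` is constant on every `supp fᵢ`. Hence all `β - αᵢ` lie in `W`; they generate a lattice
`L ⊆ ℤⁿ` of rank at most `d = dim W`, and a Smith normal form basis of `ℤⁿ` adapted to `L`,
reordered so that `L` lies in the span of its first `d` vectors, gives `A`.
-/

noncomputable section

/-- Cast of an integer lattice vector to ℝⁿ. -/
def castR {n : ℕ} (β : Fin n → ℤ) : Fin n → ℝ := fun i => (β i : ℝ)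

/-- Newton polytope of a Laurent polynomial: the convex hull of its support. -/
def newton {k : Type*} [CommRing k] {n : ℕ} (f : AddMonoidAlgebra k (Fin n → ℤ)) :
    Set (Fin n → ℝ) :=
  convexHull ℝ (castR '' (f.coeff.support : Set (Fin n → ℤ)))

open Module Matrix

section Extremal

variable {R A C : Type*} [AddCommMonoid C] [LinearOrder C] [IsOrderedCancelAddMonoid C]
  {D : A → C}

theorem AddMonoidAlgebra.add_mem_support_mul_of_forall_le [Semiring R] [NoZeroDivisors R]
    [Add A] (hD : D.Injective) (hadd : ∀ a b, D (a + b) = D a + D b) {p q : AddMonoidAlgebra R A}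
    {a b : A} (ha : a ∈ p.coeff.support) (hamax : ∀ x ∈ p.coeff.support, D x ≤ D a)
    (hb : b ∈ q.coeff.support) (hbmax : ∀ y ∈ q.coeff.support, D y ≤ D b) :
    a + b ∈ (p * q).coeff.support := by
  have hunique : UniqueAdd p.coeff.support q.coeff.support a b := by
    intro x y hx hy hxy
    have hsum : D x + D y = D a + D b := by rw [← hadd, ← hadd, hxy]
    obtain ⟨hxa, hyb⟩ := (add_eq_add_iff_eq_and_eq (hamax x hx) (hbmax y hy)).1 hsum
    exact ⟨hD hxa, hD hyb⟩
  rw [Finsupp.mem_support_iff, AddMonoidAlgebra.coeff_mul_add_of_uniqueAdd hunique]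
  exact mul_ne_zero (Finsupp.mem_support_iff.1 ha) (Finsupp.mem_support_iff.1 hb)

theorem AddMonoidAlgebra.apply_le_of_mem_support_mul [Semiring R] [Add A]
    (hadd : ∀ a b, D (a + b) = D a + D b) {p q : AddMonoidAlgebra R A} {a b : A}
    (hamax : ∀ x ∈ p.coeff.support, D x ≤ D a) (hbmax : ∀ y ∈ q.coeff.support, D y ≤ D b) :
    ∀ c ∈ (p * q).coeff.support, D c ≤ D (a + b) := by
  classical
  intro c hc
  obtain ⟨x, hx, y, hy, rfl⟩ := Finset.mem_add.1 (AddMonoidAlgebra.support_coeff_mul_subset p q hc)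
  rw [hadd, hadd]
  exact add_le_add (hamax x hx) (hbmax y hy)

theorem AddMonoidAlgebra.sum_mem_support_prod_of_forall_le [CommSemiring R] [Nontrivial R]
    [NoZeroDivisors R] [AddCommMonoid A] (hD : D.Injective)
    (hadd : ∀ a b, D (a + b) = D a + D b) {ι : Type*} (s : Finset ι) {f : ι → AddMonoidAlgebra R A} {g : ι → A}
    (hg : ∀ i ∈ s, g i ∈ (f i).coeff.support)
    (hgmax : ∀ i ∈ s, ∀ x ∈ (f i).coeff.support, D x ≤ D (g i)) :
    ∑ i ∈ s, g i ∈ (∏ i ∈ s, f i).coeff.support ∧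
      ∀ c ∈ (∏ i ∈ s, f i).coeff.support, D c ≤ D (∑ i ∈ s, g i) := by
  classical
  induction s using Finset.cons_induction with
  | empty => simp [AddMonoidAlgebra.one_def]
  | cons i s hi ih =>
    obtain ⟨hmem, hmax⟩ := ih (fun j hj ↦ hg j (Finset.mem_cons_of_mem hj))
      (fun j hj ↦ hgmax j (Finset.mem_cons_of_mem hj))
    have hgi := hg i (Finset.mem_cons_self i s)
    have hgimax := hgmax i (Finset.mem_cons_self i s)
    rw [Finset.prod_cons, Finset.sum_cons]
    exact ⟨add_mem_support_mul_of_forall_le hD hadd hgi hgimax hmem hmax,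
      apply_le_of_mem_support_mul hadd hgimax hmax⟩

end Extremal

theorem castR_sub {n : ℕ} (a b : Fin n → ℤ) : castR (a - b) = castR a - castR b := by
  funext i
  simp [castR]

section Newton

variable {R : Type*} [CommSemiring R] [Nontrivial R] [NoZeroDivisors R] {n : ℕ} {ι : Type*}

theorem AddMonoidAlgebra.exists_argmax_sum_mem_support_prod (ψ : (Fin n → ℤ) →+ ℝ)
    (s : Finset ι) (f : ι → AddMonoidAlgebra R (Fin n → ℤ)) (hf : ∀ i ∈ s, f i ≠ 0) :
    ∃ g : ι → Fin n → ℤ, (∀ i ∈ s, g i ∈ (f i).coeff.support ∧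
        ∀ x ∈ (f i).coeff.support, ψ x ≤ ψ (g i)) ∧
      ∑ i ∈ s, g i ∈ (∏ i ∈ s, f i).coeff.support := by
  -- Breaking ties lexicographically makes the maximiser on each factor unique.
  let D : (Fin n → ℤ) → ℝ ×ₗ Lex (Fin n → ℤ) := fun a ↦ toLex (ψ a, toLex a)
  have hD : D.Injective := fun a b h ↦ by simpa [D] using congrArg (fun x ↦ (ofLex x).2) h
  have hadd : ∀ a b, D (a + b) = D a + D b := fun a b ↦ by simp [D, map_add]; rfl
  have hmax : ∀ i ∈ s, ∃ a ∈ (f i).coeff.support, ∀ x ∈ (f i).coeff.support, D x ≤ D a :=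
    fun i hi ↦ Finset.exists_max_image _ D (Finsupp.support_nonempty_iff.2
      (AddMonoidAlgebra.coeff_eq_zero.not.2 (hf i hi)))
  choose! g hg hgmax using hmax
  refine ⟨g, fun i hi ↦ ⟨hg i hi, fun x hx ↦ ?_⟩,
    (sum_mem_support_prod_of_forall_le hD hadd s hg hgmax).1⟩
  rcases Prod.Lex.le_iff.1 (hgmax i hi x hx) with h | h
  exacts [h.le, h.1.le]

theorem AddMonoidAlgebra.subsingleton_image_support_of_prod (ψ : (Fin n → ℤ) →+ ℝ)
    {s : Finset ι} {f : ι → AddMonoidAlgebra R (Fin n → ℤ)} (hf : ∀ i ∈ s, f i ≠ 0)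
    (hψ : (ψ '' (∏ i ∈ s, f i).coeff.support).Subsingleton) {i : ι} (hi : i ∈ s) :
    (ψ '' (f i).coeff.support).Subsingleton := by
  obtain ⟨g, hg, hgs⟩ := exists_argmax_sum_mem_support_prod ψ s f hf
  obtain ⟨g', hg', hgs'⟩ := exists_argmax_sum_mem_support_prod (-ψ) s f hf
  simp only [AddMonoidHom.neg_apply, neg_le_neg_iff] at hg'
  have hle : ∀ j ∈ s, ψ (g' j) ≤ ψ (g j) := fun j hj ↦ (hg j hj).2 _ (hg' j hj).1
  have hsum : ∑ j ∈ s, ψ (g' j) = ∑ j ∈ s, ψ (g j) := by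
    simpa only [map_sum] using hψ (Set.mem_image_of_mem ψ hgs') (Set.mem_image_of_mem ψ hgs)
  have hgg' := (Finset.sum_eq_sum_iff_of_le hle).1 hsum i hi
  have hpinch : ∀ x ∈ (f i).coeff.support, ψ x = ψ (g i) := fun x hx ↦
    le_antisymm ((hg i hi).2 x hx) (hgg' ▸ (hg' i hi).2 x hx)
  rintro _ ⟨x, hx, rfl⟩ _ ⟨y, hy, rfl⟩
  rw [hpinch x hx, hpinch y hy]

theorem castR_sub_mem_vectorSpan {s : Finset ι}
    {f : ι → AddMonoidAlgebra R (Fin n → ℤ)} (hf : ∀ i ∈ s, f i ≠ 0) {i : ι} (hi : i ∈ s)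
    {α β : Fin n → ℤ} (hα : α ∈ (f i).coeff.support) (hβ : β ∈ (f i).coeff.support) :
    castR (β - α) ∈ vectorSpan ℝ (castR '' (∏ i ∈ s, f i).coeff.support) := by
  by_contra hnot
  obtain ⟨φ, hφ, hφW⟩ := Submodule.exists_dual_map_eq_bot_of_notMem hnot inferInstance
  let ψ : (Fin n → ℤ) →+ ℝ :=
    φ.toAddMonoidHom.comp ((Algebra.linearMap ℤ ℝ).compLeft (Fin n)).toAddMonoidHom
  have hψ : ∀ x, ψ x = φ (castR x) := fun _ ↦ rfl
  have hconst : (ψ '' (∏ i ∈ s, f i).coeff.support).Subsingleton := by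
    rintro _ ⟨x, hx, rfl⟩ _ ⟨y, hy, rfl⟩
    have hxy : castR x -ᵥ castR y ∈ vectorSpan ℝ (castR '' (∏ i ∈ s, f i).coeff.support) :=
      vsub_mem_vectorSpan ℝ (Set.mem_image_of_mem _ hx) (Set.mem_image_of_mem _ hy)
    have h0 : φ (castR x - castR y) = 0 := by
      simpa [hφW] using Submodule.mem_map_of_mem (f := φ) hxy
    rw [hψ, hψ, ← sub_eq_zero, ← map_sub, h0]
  apply hφ
  have := AddMonoidAlgebra.subsingleton_image_support_of_prod ψ hf hconst hi
    (Set.mem_image_of_mem ψ hβ) (Set.mem_image_of_mem ψ hα)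
  rw [castR_sub, map_sub, ← hψ, ← hψ, this, sub_self]

end Newton

theorem Module.Basis.vecMul_transpose_toMatrix_basisFun {R ι : Type*} [CommRing R] [Fintype ι]
    [DecidableEq ι] (b : Basis ι R (ι → R)) (v : ι → R) :
    v ᵥ* (b.toMatrix (Pi.basisFun R ι))ᵀ = b.repr v := by
  have hv : ⇑((Pi.basisFun R ι).repr v) = v := funext (Pi.basisFun_repr R ι v)
  rw [Matrix.vecMul_transpose, ← (Pi.basisFun R ι).toMatrix_mulVec_repr b v, hv]

section Lattice

variable {R : Type*} [CommRing R] [IsDomain R] [IsPrincipalIdealRing R] {n : ℕ}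

theorem Submodule.finrank_le_finrank_of_algebraMap_comp_mem {S : Type*} [Field S] [Algebra R S]
    [FaithfulSMul R S] {ι : Type*} [Fintype ι] {L : Submodule R (ι → R)} {W : Submodule S (ι → S)}
    (hLW : L ≤ (W.restrictScalars R).comap ((Algebra.linearMap R S).compLeft ι)) :
    finrank R L ≤ finrank S W := by
  let b := Module.finBasis R L
  have hli : LinearIndependent S (fun j ↦ algebraMap R S ∘ (b j : ι → R)) :=
    linearIndependent_algebraMap_comp_iff.2 (b.linearIndependent.map' L.subtype L.ker_subtype)
  calc finrank R L = finrank S (span S (Set.range fun j ↦ algebraMap R S ∘ (b j : ι → R))) := by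
        rw [finrank_span_eq_card hli, Fintype.card_fin]
    _ ≤ finrank S W :=
        Submodule.finrank_mono (span_le.2 (Set.range_subset_iff.2 fun j ↦ hLW (b j).2))

theorem Submodule.exists_basis_repr_eq_zero_of_finrank_le {M : Type*} [AddCommGroup M] [Module R M]
    (b₀ : Basis (Fin n) R M) (L : Submodule R M) {d : ℕ} (hd : finrank R L ≤ d) :
    ∃ b : Basis (Fin n) R M, ∀ v ∈ L, ∀ j : Fin n, d ≤ j → b.repr v j = 0 := by
  obtain ⟨m, snf⟩ := L.smithNormalForm b₀
  have hmd : m ≤ d := by simpa [finrank_eq_card_basis snf.bN] using hd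
  have hmn : m ≤ n := Fin.le_of_embedding snf.f
  obtain ⟨σ, hσ⟩ := Equiv.Perm.exists_extending_pair snf.f (Fin.castLE hmn) snf.f.injective
    (Fin.castLE_injective hmn)
  refine ⟨snf.bM.reindex σ, fun v hv j hj ↦ ?_⟩
  rw [Basis.repr_reindex_apply]
  refine snf.repr_eq_zero_of_notMem_range ⟨v, hv⟩ fun ⟨t, ht⟩ ↦ ?_
  have hjt : (j : ℕ) = t := by rw [← Fin.val_castLE hmn t, ← hσ t, ht, σ.apply_symm_apply]
  have := t.isLt
  omega

theorem Submodule.exists_isUnit_vecMul_eq_zero_of_finrank_le (L : Submodule R (Fin n → R)) {d : ℕ}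
    (hd : finrank R L ≤ d) :
    ∃ A : Matrix (Fin n) (Fin n) R, IsUnit A ∧ ∀ v ∈ L, ∀ j : Fin n, d ≤ j → (v ᵥ* A) j = 0 := by
  obtain ⟨b, hb⟩ := L.exists_basis_repr_eq_zero_of_finrank_le (Pi.basisFun R (Fin n)) hd
  have := b.invertibleToMatrix (Pi.basisFun R (Fin n))
  refine ⟨(b.toMatrix (Pi.basisFun R (Fin n)))ᵀ,
    (Matrix.isUnit_transpose _).2 (isUnit_of_invertible _), fun v hv j hj ↦ ?_⟩
  rw [b.vecMul_transpose_toMatrix_basisFun]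
  exact hb v hv j hj

end Lattice

/-- Lemma 5.? (torus factors): there is `A ∈ GLₙ(ℤ)` such that, for all `i` and
all `β ∈ supp(fᵢ)`, the row vector `(β − αᵢ)·A` has vanishing entries in
positions `d, d+1, …, n−1`, where `d` is the dimension of the Newton polytope of
`f₁ ⋯ f_r`; i.e. each `(X^{−αᵢ} fᵢ)^A` involves only the first `d` variables. -/
theorem exists_glnZ_support_in_first_d_coords {k : Type*} [Field k] {n r : ℕ}
    (f : Fin r → AddMonoidAlgebra k (Fin n → ℤ)) (hf : ∀ i, f i ≠ 0)
    (α : Fin r → (Fin n → ℤ)) (hα : ∀ i, α i ∈ (f i).coeff.support)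
    (d : ℕ)
    (hd : d = Module.finrank ℝ (affineSpan ℝ (newton (∏ i, f i))).direction) :
    ∃ A : Matrix (Fin n) (Fin n) ℤ, IsUnit A ∧
      ∀ i, ∀ β ∈ (f i).coeff.support, ∀ j : Fin n, d ≤ (j : ℕ) →
        Matrix.vecMul (β - α i) A j = 0 := by
  let L : Submodule ℤ (Fin n → ℤ) :=
    Submodule.span ℤ {v | ∃ i, ∃ β ∈ (f i).coeff.support, v = β - α i}
  have hL : finrank ℤ L ≤ d := by
    rw [hd, newton, affineSpan_convexHull, direction_affineSpan]
    refine Submodule.finrank_le_finrank_of_algebraMap_comp_mem (Submodule.span_le.2 ?_)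
    rintro _ ⟨i, β, hβ, rfl⟩
    exact castR_sub_mem_vectorSpan (fun i _ ↦ hf i) (Finset.mem_univ i) (hα i) hβ
  obtain ⟨A, hA, hAL⟩ := L.exists_isUnit_vecMul_eq_zero_of_finrank_le hL
  exact ⟨A, hA, fun i β hβ ↦ hAL _ (Submodule.subset_span ⟨i, β, hβ, rfl⟩)⟩
end
end

section
/- Let K be a field with a surjective discrete valuation ν and valuation ring O, and let C₀ ⊆ ℝⁿ be a rational half-open cone with dual cone C₀* = {α : ⟨α,ω⟩ ≥ 0 for all ω ∈ C₀}. Let u = c X^γ be a term with ν(c) = 0 and ⟨γ,ω⟩ = 0 for all ω ∈ C₀, and let v be a Laurent polynomial over K with all coefficients in O and supp(v) ⊆ C₀*. Then for arbitrary Laurent polynomials f₁, f₂ over K and every x ∈ (Kˣ)ⁿ with ν(x) ∈ C₀ ∩ ℤⁿ, one has min( ν((u·f₁ + v·f₂)(x)), ν(f₂(x)) ) = min( ν(f₁(x)), ν(f₂(x)) ) in ℤ ∪ {∞}. -/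
/-!
Evaluation at `x` is a ring homomorphism, so `(u·f₁ + w·f₂)(x) = u(x) f₁(x) + w(x) f₂(x)`.
Because `ν(x) ∈ C₀`, a monomial `X^β` has valuation `⟨β, ν(x)⟩` at `x`: this is `0` for the
unit term `u`, and `≥ 0` on the support of `w`, so `ν(u(x)) = 0` and `ν(w(x)) ≥ 0`. The claim is
then the ultrametric fact `min(ν(a + b), ν(r)) = min(ν(a), ν(r))` whenever `ν(r) ≤ ν(b)`.
-/

noncomputable section

/-- A rational half-open cone in ℝⁿ. -/
def IsRatHalfOpenCone {n : ℕ} (C : Set (Fin n → ℝ)) : Prop :=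
  ∃ (d e : ℕ) (φ : Fin d → (Fin n → ℤ)) (χ : Fin e → (Fin n → ℤ)),
    C = {ω | (∀ i, 0 ≤ ipR (φ i) ω) ∧ (∀ j, 0 < ipR (χ j) ω)}

/-- Evaluation of a Laurent polynomial at a point of the torus `(Kˣ)ⁿ`. -/
def evalL {K : Type*} [Field K] {n : ℕ} (f : AddMonoidAlgebra K (Fin n → ℤ))
    (x : Fin n → Kˣ) : K :=
  ∑ α ∈ f.coeff.support, f.coeff α * ∏ i, ((x i ^ (α i) : Kˣ) : K)

namespace AddValuation

section

variable {R Γ : Type*} [LinearOrderedAddCommMonoidWithTop Γ]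

theorem min_map_add_eq_min_of_le [Ring R] (v : AddValuation R Γ) {a b r : R}
    (hb : v r ≤ v b) :
    min (v (a + b)) (v r) = min (v a) (v r) := by
  rcases lt_or_ge (v a) (v r) with h | h
  · rw [v.map_add_eq_of_lt_left (h.trans_le hb)]
  · rw [min_eq_right h, min_eq_right (v.map_le_add h hb)]

theorem map_finset_prod [CommRing R] (v : AddValuation R Γ) {ι : Type*} (s : Finset ι)
    (f : ι → R) :
    v (∏ i ∈ s, f i) = ∑ i ∈ s, v (f i) := by
  classical
  induction s using Finset.induction_on with
  | empty => simp
  | insert a s ha ih => simp [Finset.prod_insert ha, Finset.sum_insert ha, ih]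

end

theorem map_zpow_of_eq_coe {K : Type*} [Field K] (v : AddValuation K (WithTop ℤ)) {y : K}
    {k : ℤ} (hy : v y = k) (m : ℤ) : v (y ^ m) = ((m * k : ℤ) : WithTop ℤ) := by
  cases m with
  | ofNat m => simp [hy, ← WithTop.coe_nsmul]
  | negSucc m =>
    rw [zpow_negSucc, map_inv, map_pow, hy, ← WithTop.coe_nsmul,
      ← WithTop.LinearOrderedAddCommGroup.coe_neg, Int.negSucc_eq, nsmul_eq_mul]
    congr 1
    push_cast
    ring

end AddValuation

theorem ipR_intCast {n : ℕ} (α ω : Fin n → ℤ) :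
    ipR α (fun i => (ω i : ℝ)) = ((∑ i, α i * ω i : ℤ) : ℝ) := by
  simp [ipR]

section Evaluation

variable {K : Type*} [Field K] {n : ℕ}

def monomialEval (x : Fin n → Kˣ) : Multiplicative (Fin n → ℤ) →* K where
  toFun α := ∏ i, ((x i ^ α.toAdd i : Kˣ) : K)
  map_one' := by simp
  map_mul' a b := by simp [zpow_add, Finset.prod_mul_distrib]

theorem evalL_eq_lift (f : AddMonoidAlgebra K (Fin n → ℤ)) (x : Fin n → Kˣ) :
    evalL f x = AddMonoidAlgebra.lift K K (Fin n → ℤ) (monomialEval x) f := by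
  simp [evalL, AddMonoidAlgebra.lift_apply, Finsupp.sum, monomialEval]

theorem evalL_add (f g : AddMonoidAlgebra K (Fin n → ℤ)) (x : Fin n → Kˣ) :
    evalL (f + g) x = evalL f x + evalL g x := by
  simp only [evalL_eq_lift, map_add]

theorem evalL_mul (f g : AddMonoidAlgebra K (Fin n → ℤ)) (x : Fin n → Kˣ) :
    evalL (f * g) x = evalL f x * evalL g x := by
  simp only [evalL_eq_lift, map_mul]

theorem evalL_single (γ : Fin n → ℤ) (c : K) (x : Fin n → Kˣ) :
    evalL (AddMonoidAlgebra.single γ c) x = c * ∏ i, ((x i ^ γ i : Kˣ) : K) := by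
  simp [evalL_eq_lift, monomialEval]

variable (v : AddValuation K (WithTop ℤ)) {x : Fin n → Kˣ} {ω : Fin n → ℤ}
  (hx : ∀ i, v (x i : K) = ω i)
include hx

theorem AddValuation.map_prod_zpow (α : Fin n → ℤ) :
    v (∏ i, ((x i ^ α i : Kˣ) : K)) = ((∑ i, α i * ω i : ℤ) : WithTop ℤ) := by
  simp only [v.map_finset_prod, Units.val_zpow_eq_zpow_val, v.map_zpow_of_eq_coe (hx _),
    WithTop.coe_sum]

theorem AddValuation.map_evalL_single (γ : Fin n → ℤ) (c : K) :
    v (evalL (AddMonoidAlgebra.single γ c) x) = v c + ((∑ i, γ i * ω i : ℤ) : WithTop ℤ) := by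
  rw [evalL_single, v.map_mul, v.map_prod_zpow hx]

theorem AddValuation.zero_le_map_evalL (w : AddMonoidAlgebra K (Fin n → ℤ))
    (hcoeff : ∀ β, 0 ≤ v (w.coeff β)) (hsupp : ∀ β ∈ w.coeff.support, 0 ≤ ∑ i, β i * ω i) :
    0 ≤ v (evalL w x) := by
  refine v.map_le_sum fun β hβ => ?_
  rw [v.map_mul, v.map_prod_zpow hx]
  exact add_nonneg (hcoeff β) (WithTop.coe_nonneg.mpr (hsupp β hβ))

end Evaluation

theorem valuation_min_row_operation_general {K : Type*} [Field K] {n : ℕ}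
    (v : AddValuation K (WithTop ℤ))
    (C : Set (Fin n → ℝ))
    (c : K) (γ : Fin n → ℤ) (hc : v c = (0 : WithTop ℤ))
    (hγ : ∀ ω ∈ C, ipR γ ω = 0)
    (w : AddMonoidAlgebra K (Fin n → ℤ)) (hwcoeff : ∀ β, 0 ≤ v (w.coeff β))
    (hwsupp : ∀ β ∈ w.coeff.support, ∀ ω ∈ C, 0 ≤ ipR β ω)
    (f₁ f₂ : AddMonoidAlgebra K (Fin n → ℤ))
    (x : Fin n → Kˣ) (ω : Fin n → ℤ)
    (hx : ∀ i, v ((x i : K)) = (ω i : WithTop ℤ))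
    (hω : (fun i => (ω i : ℝ)) ∈ C) :
    min (v (evalL ((AddMonoidAlgebra.single γ c) * f₁ + w * f₂) x))
        (v (evalL f₂ x))
      = min (v (evalL f₁ x)) (v (evalL f₂ x)) := by
  have hγω : ∑ i, γ i * ω i = 0 := by
    exact_mod_cast (ipR_intCast γ ω).symm.trans (hγ _ hω)
  have hu : v (evalL (AddMonoidAlgebra.single γ c) x) = 0 := by
    rw [v.map_evalL_single hx, hc, hγω, WithTop.coe_zero, zero_add]
  have hw : 0 ≤ v (evalL w x) := v.zero_le_map_evalL hx w hwcoeff fun β hβ => by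
    exact_mod_cast (ipR_intCast β ω).symm.trans_ge (hwsupp β hβ _ hω)
  have hwf₂ : v (evalL f₂ x) ≤ v (evalL w x * evalL f₂ x) := by
    rw [v.map_mul]
    exact le_add_of_nonneg_left hw
  rw [evalL_add, evalL_mul, evalL_mul, v.min_map_add_eq_min_of_le hwf₂, v.map_mul, hu, zero_add]

/-- Lemma 6.3(S2): for a unit term `u = c X^γ` (with `ν(c) = 0` and `⟨γ,·⟩ ≡ 0`
on `C₀`) and a Laurent polynomial `w` with coefficients in the valuation ring
and support in the dual cone `C₀*`, and arbitrary Laurent polynomials `f₁, f₂`,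
one has `min(ν((u·f₁ + w·f₂)(x)), ν(f₂(x))) = min(ν(f₁(x)), ν(f₂(x)))` for all
`x ∈ (Kˣ)ⁿ` with `ν(x) ∈ C₀ ∩ ℤⁿ`. -/
theorem valuation_min_row_operation {K : Type*} [Field K] {n : ℕ}
    (v : AddValuation K (WithTop ℤ))
    (hsurj : ∀ m : ℤ, ∃ y : K, v y = (m : WithTop ℤ))
    (hker : ∀ y : K, v y = ⊤ → y = 0)
    (C : Set (Fin n → ℝ)) (hC : IsRatHalfOpenCone C)
    (c : K) (γ : Fin n → ℤ) (hc : v c = (0 : WithTop ℤ))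
    (hγ : ∀ ω ∈ C, ipR γ ω = 0)
    (w : AddMonoidAlgebra K (Fin n → ℤ)) (hwcoeff : ∀ β, 0 ≤ v (w.coeff β))
    (hwsupp : ∀ β ∈ w.coeff.support, ∀ ω ∈ C, 0 ≤ ipR β ω)
    (f₁ f₂ : AddMonoidAlgebra K (Fin n → ℤ))
    (x : Fin n → Kˣ) (ω : Fin n → ℤ)
    (hx : ∀ i, v ((x i : K)) = (ω i : WithTop ℤ))
    (hω : (fun i => (ω i : ℝ)) ∈ C) :
    min (v (evalL ((AddMonoidAlgebra.single γ c) * f₁ + w * f₂) x))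
        (v (evalL f₂ x))
      = min (v (evalL f₁ x)) (v (evalL f₂ x)) :=
  valuation_min_row_operation_general v C c γ hc hγ w hwcoeff hwsupp f₁ f₂ x ω hx hω
end
end

section
/- Let C₀ ⊆ ℝⁿ be a rational half-open cone and let P₀ be a model of C₀. Then C₀ is empty if and only if P₀ is empty. -/
noncomputable section

/-- Standard inner product of a rational vector with a real vector. -/
def ipQ {n : ℕ} (α : Fin n → ℚ) (ω : Fin n → ℝ) : ℝ := ∑ i, (α i : ℝ) * ω i

/-- The integer lattice ℤⁿ viewed inside ℝⁿ. -/
def intLattice (n : ℕ) : Set (Fin n → ℝ) := Set.range (castR (n := n))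

/-- A rational polyhedron in ℝⁿ. -/
def IsRatPolyhedron {n : ℕ} (P : Set (Fin n → ℝ)) : Prop :=
  ∃ (t : ℕ) (a : Fin t → (Fin n → ℚ)) (b : Fin t → ℚ),
    P = {ω | ∀ i, (b i : ℝ) ≤ ipQ (a i) ω}

/-- A (polyhedral) model of a rational half-open cone `C`: a rational polyhedron
`P` with `C ∩ ℤⁿ = P ∩ ℤⁿ` and `a·P ⊆ P` for all positive integers `a`. -/
def IsConeModel {n : ℕ} (C P : Set (Fin n → ℝ)) : Prop :=
  IsRatPolyhedron P ∧ C ∩ intLattice n = P ∩ intLattice n ∧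
    ∀ a : ℕ, 0 < a → ∀ x ∈ P, (a : ℝ) • x ∈ P

/-
A real point ω of a set cut out by finitely many rational weak and strict linear inequalities can
be replaced by a rational one: extend 1 to a basis of ℝ over ℚ and send each basis vector to a
nearby rational (1 to itself). The resulting ℚ-linear functional L : ℝ → ℚ fixes ℚ, so the
inequalities that are equalities at ω survive at (L ω_k)_k, and it is close enough to the identity
on the finitely many values ⟨a_i, ω⟩ to keep the others. Clearing denominators by a positive integer
then gives a lattice point, as C and P are both stable under such scalings; and C and P have the
same lattice points.
-/

open Filter Topology

theorem Module.Basis.abs_constr_sub_le {κ : Type*} (B : Module.Basis κ ℚ ℝ) (r : κ → ℚ) {δ : ℝ}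
    (hr : ∀ k, |(r k : ℝ) - B k| ≤ δ) (x : ℝ) :
    |(B.constr ℚ r x : ℝ) - x| ≤ δ * (B.repr x).sum fun _ c => |(c : ℝ)| := by
  have hx : x = (B.repr x).sum fun k c => (c : ℝ) * B k := by
    conv_lhs => rw [← B.linearCombination_repr x]
    simp [Finsupp.linearCombination_apply, Rat.smul_def]
  have hL : (B.constr ℚ r x : ℝ) = (B.repr x).sum fun k c => (c : ℝ) * r k := by
    simp [Module.Basis.constr_apply, Finsupp.sum]
  have hdiff : (B.constr ℚ r x : ℝ) - x = (B.repr x).sum fun k c => (c : ℝ) * (r k - B k) := by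
    rw [hL]
    nth_rewrite 2 [hx]
    simp only [Finsupp.sum, mul_sub, Finset.sum_sub_distrib]
  rw [hdiff, Finsupp.sum, Finsupp.sum, Finset.mul_sum]
  refine (Finset.abs_sum_le_sum_abs _ _).trans (Finset.sum_le_sum fun k _ => ?_)
  rw [abs_mul, mul_comm δ]
  exact mul_le_mul_of_nonneg_left (hr k) (abs_nonneg _)

theorem exists_ratLinearMap_one_abs_sub_lt {ι : Type*} [Fintype ι] (v : ι → ℝ) {ε : ℝ}
    (hε : 0 < ε) : ∃ L : ℝ →ₗ[ℚ] ℚ, L 1 = 1 ∧ ∀ i, |(L (v i) : ℝ) - v i| < ε := by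
  have hone : LinearIndepOn ℚ id {(1 : ℝ)} := (linearIndepOn_singleton_iff ℚ).mpr one_ne_zero
  let B := Module.Basis.extend hone
  set M := ∑ i, (B.repr (v i)).sum fun _ c => |(c : ℝ)|
  have hM : 0 ≤ M := Finset.sum_nonneg fun i _ => Finset.sum_nonneg fun _ _ => abs_nonneg _
  set δ := ε / (M + 1)
  have hδ : 0 < δ := by positivity
  have hr : ∀ k, ∃ q : ℚ, |(q : ℝ) - B k| ≤ δ ∧ (B k = 1 → q = 1) := by
    intro k
    by_cases hk : B k = 1
    · exact ⟨1, by simp [hk, hδ.le], fun _ => rfl⟩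
    · obtain ⟨q, hq⟩ := exists_rat_near (B k) hδ
      exact ⟨q, by rw [abs_sub_comm]; exact hq.le, fun h => absurd h hk⟩
  choose r hrδ hr1 using hr
  refine ⟨B.constr ℚ r, ?_, fun i => ?_⟩
  · let one : hone.extend (Set.subset_univ _) := ⟨1, hone.subset_extend _ rfl⟩
    have h1 : B one = 1 := Module.Basis.extend_apply_self _ _
    simpa [h1, hr1 _ h1] using B.constr_basis ℚ r one
  · calc |(B.constr ℚ r (v i) : ℝ) - v i|
        ≤ δ * (B.repr (v i)).sum fun _ c => |(c : ℝ)| := B.abs_constr_sub_le r hrδ (v i)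
      _ ≤ δ * M := by
        gcongr
        exact Finset.single_le_sum (f := fun i => (B.repr (v i)).sum fun _ c => |(c : ℝ)|)
          (fun i _ => Finset.sum_nonneg fun _ _ => abs_nonneg _) (Finset.mem_univ i)
      _ < ε := by
        rw [div_mul_eq_mul_div, div_lt_iff₀ (by positivity)]
        linarith

theorem exists_ratLinearMap_le_and_lt_of_le {ι : Type*} [Fintype ι] (v : ι → ℝ) (b : ι → ℚ)
    (hb : ∀ i, (b i : ℝ) ≤ v i) :
    ∃ L : ℝ →ₗ[ℚ] ℚ, ∀ i, b i ≤ L (v i) ∧ ((b i : ℝ) < v i → b i < L (v i)) := by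
  obtain ⟨ε, hε, hgap⟩ : ∃ ε : ℝ, 0 < ε ∧ ∀ i, (b i : ℝ) < v i → ε < v i - b i := by
    have hpos : ∀ᶠ ε in 𝓝[>] (0 : ℝ), 0 < ε := self_mem_nhdsWithin
    refine (hpos.and (eventually_all.2 fun i => ?_)).exists
    by_cases h : (b i : ℝ) < v i
    · filter_upwards [nhdsWithin_le_nhds (eventually_lt_nhds (sub_pos.2 h))] with ε hε _
      exact hε
    · exact Eventually.of_forall fun _ h' => absurd h' h
  obtain ⟨L, hL1, hL⟩ := exists_ratLinearMap_one_abs_sub_lt v hε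
  have hLlt : ∀ i, (b i : ℝ) < v i → b i < L (v i) := fun i h => by
    have := (abs_lt.1 (hL i)).1
    exact_mod_cast (show (b i : ℝ) < L (v i) by linarith [hgap i h])
  refine ⟨L, fun i => ⟨?_, hLlt i⟩⟩
  rcases (hb i).eq_or_lt with h | h
  · rw [← h, show ((b i : ℚ) : ℝ) = b i • (1 : ℝ) by simp [Rat.smul_def], L.map_smul, hL1]
    simp
  · exact (hLlt i h).le

theorem exists_nat_mul_eq_intCast {ι : Type*} [Fintype ι] (q : ι → ℚ) :
    ∃ D : ℕ, 0 < D ∧ ∃ z : ι → ℤ, ∀ k, (z k : ℚ) = D * q k := by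
  refine ⟨∏ k, (q k).den, Finset.prod_pos fun k _ => (q k).pos, ?_⟩
  have hdvd : ∀ k, (q k).den ∣ ∏ k, (q k).den :=
    fun k => Finset.dvd_prod_of_mem _ (Finset.mem_univ k)
  choose m hm using hdvd
  refine ⟨fun k => (q k).num * m k, fun k => ?_⟩
  rw [hm k]
  push_cast
  rw [← Rat.mul_den_eq_num]
  ring

section

variable {n : ℕ}

theorem ipQ_intCast (α : Fin n → ℤ) (ω : Fin n → ℝ) : ipQ (fun k => (α k : ℚ)) ω = ipR α ω := by
  simp [ipQ, ipR]

theorem ipR_smul (α : Fin n → ℤ) (c : ℝ) (ω : Fin n → ℝ) : ipR α (c • ω) = c * ipR α ω := by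
  simp only [ipR, Pi.smul_apply, smul_eq_mul, Finset.mul_sum]
  exact Finset.sum_congr rfl fun _ _ => by ring

theorem ipQ_ratLinearMap (L : ℝ →ₗ[ℚ] ℚ) (a : Fin n → ℚ) (ω : Fin n → ℝ) :
    ipQ a (fun k => (L (ω k) : ℝ)) = L (ipQ a ω) := by
  have : ipQ a ω = ∑ k, a k • ω k := by simp [ipQ, Rat.smul_def]
  rw [this, map_sum]
  simp [ipQ]

def IsRatHalfOpenPolyhedron (S : Set (Fin n → ℝ)) : Prop :=
  ∃ (t s : ℕ) (a : Fin t → Fin n → ℚ) (b : Fin t → ℚ) (c : Fin s → Fin n → ℚ) (d : Fin s → ℚ),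
    S = {ω | (∀ i, (b i : ℝ) ≤ ipQ (a i) ω) ∧ ∀ j, (d j : ℝ) < ipQ (c j) ω}

theorem IsRatPolyhedron.isRatHalfOpenPolyhedron {P : Set (Fin n → ℝ)} (hP : IsRatPolyhedron P) :
    IsRatHalfOpenPolyhedron P := by
  obtain ⟨t, a, b, rfl⟩ := hP
  exact ⟨t, 0, a, b, Fin.elim0, Fin.elim0, by simp⟩

theorem IsRatHalfOpenCone.isRatHalfOpenPolyhedron {C : Set (Fin n → ℝ)}
    (hC : IsRatHalfOpenCone C) : IsRatHalfOpenPolyhedron C := by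
  obtain ⟨d, e, φ, χ, rfl⟩ := hC
  exact ⟨d, e, fun i k => φ i k, 0, fun j k => χ j k, 0, by simp [ipQ_intCast]⟩

theorem IsRatHalfOpenCone.smul_mem {C : Set (Fin n → ℝ)} (hC : IsRatHalfOpenCone C) {c : ℝ}
    (hc : 0 < c) {ω : Fin n → ℝ} (hω : ω ∈ C) : c • ω ∈ C := by
  obtain ⟨d, e, φ, χ, rfl⟩ := hC
  exact ⟨fun i => by rw [ipR_smul]; exact mul_nonneg hc.le (hω.1 i),
    fun j => by rw [ipR_smul]; exact mul_pos hc (hω.2 j)⟩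

theorem IsRatHalfOpenPolyhedron.exists_rat_mem {S : Set (Fin n → ℝ)}
    (hS : IsRatHalfOpenPolyhedron S) (hne : S.Nonempty) :
    ∃ q : Fin n → ℚ, (fun k => (q k : ℝ)) ∈ S := by
  obtain ⟨t, s, a, b, c, d, rfl⟩ := hS
  obtain ⟨ω, hωa, hωc⟩ := hne
  obtain ⟨L, hL⟩ := exists_ratLinearMap_le_and_lt_of_le
    (Sum.elim (fun i => ipQ (a i) ω) fun j => ipQ (c j) ω) (Sum.elim b d)
    (Sum.forall.2 ⟨hωa, fun j => (hωc j).le⟩)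
  refine ⟨fun k => L (ω k), fun i => ?_, fun j => ?_⟩
  · rw [ipQ_ratLinearMap]
    exact_mod_cast (hL (.inl i)).1
  · rw [ipQ_ratLinearMap]
    exact_mod_cast (hL (.inr j)).2 (hωc j)

theorem IsRatHalfOpenPolyhedron.inter_intLattice_nonempty {S : Set (Fin n → ℝ)}
    (hS : IsRatHalfOpenPolyhedron S) (hscale : ∀ a : ℕ, 0 < a → ∀ x ∈ S, (a : ℝ) • x ∈ S)
    (hne : S.Nonempty) : (S ∩ intLattice n).Nonempty := by
  obtain ⟨q, hq⟩ := hS.exists_rat_mem hne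
  obtain ⟨D, hD, z, hz⟩ := exists_nat_mul_eq_intCast q
  have hzq : castR z = (D : ℝ) • fun k => (q k : ℝ) := by
    funext k
    simpa [castR] using congrArg (fun x : ℚ => (x : ℝ)) (hz k)
  exact ⟨castR z, hzq ▸ hscale D hD _ hq, z, rfl⟩

theorem IsRatHalfOpenPolyhedron.inter_intLattice_eq_empty_iff {S : Set (Fin n → ℝ)}
    (hS : IsRatHalfOpenPolyhedron S) (hscale : ∀ a : ℕ, 0 < a → ∀ x ∈ S, (a : ℝ) • x ∈ S) :
    S ∩ intLattice n = ∅ ↔ S = ∅ := by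
  simp only [← Set.not_nonempty_iff_eq_empty, not_iff_not]
  exact ⟨fun h => h.mono Set.inter_subset_left, hS.inter_intLattice_nonempty hscale⟩

end

/-- A rational half-open cone is empty iff any model of it is empty. -/
theorem cone_empty_iff_model_empty {n : ℕ} (C P : Set (Fin n → ℝ))
    (hC : IsRatHalfOpenCone C) (hP : IsConeModel C P) :
    C = ∅ ↔ P = ∅ := by
  obtain ⟨hPpoly, hlat, hPscale⟩ := hP
  have hCscale : ∀ a : ℕ, 0 < a → ∀ x ∈ C, (a : ℝ) • x ∈ C :=
    fun _ ha _ hx => hC.smul_mem (Nat.cast_pos.2 ha) hx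
  rw [← hC.isRatHalfOpenPolyhedron.inter_intLattice_eq_empty_iff hCscale, hlat,
    hPpoly.isRatHalfOpenPolyhedron.inter_intLattice_eq_empty_iff hPscale]
end
end

section
/- Let C₀ ⊆ ℝⁿ be a nonempty rational half-open cone and let P₀ be a model of C₀. Then (i) P₀ is contained in the topological closure cl(C₀) of C₀, and (ii) for every topologically closed set B ⊆ ℝⁿ with P₀ ⊆ B and λ·B ⊆ B for all real λ > 0, one has cl(C₀) ⊆ B. In other words, cl(C₀) is the smallest closed cone containing P₀. -/
noncomputable section

/-!
Rational points are dense in every set cut out by finitely many rational weak and strict linear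
inequalities. Indeed, if `h : ℝ → ℚ` is `ℚ`-linear and fixes `ℚ`, then `h ∘ x` satisfies every
rational linear equation that `x` satisfies, and such vectors `h ∘ x` approximate `x`: expand the
coordinates of `x` in a Hamel basis of `ℝ` over `ℚ` and send the basis vectors to nearby rationals.
The inequalities that are strict at `x` survive small perturbations.

A rational point of `P` (resp. `C`) has a positive integer multiple in `ℤⁿ`, which lies in `C`
(resp. `P`) because the model agrees with `C` on `ℤⁿ`. Scaling back inside the cone `C` (resp. `B`)
gives `P ∩ ℚⁿ ⊆ C` and `C ∩ ℚⁿ ⊆ B`, and taking closures gives both claims.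
-/

open Module

theorem mem_closure_range_ratLinearMap_comp {ι : Type*} (z : ι → ℝ) :
    z ∈ closure (Set.range fun k : ℝ →ₗ[ℚ] ℚ => fun i => (k (z i) : ℝ)) := by
  let b := Basis.ofVectorSpace ℚ ℝ
  -- `expand s` evaluates the `b`-expansions of the `z i` with the basis vectors replaced by `s`;
  -- at rational `s` it is `k ∘ z` for the `ℚ`-linear map `k = b.constr ℚ s`.
  let expand : (Basis.ofVectorSpaceIndex ℚ ℝ → ℝ) → ι → ℝ :=
    fun s i => (b.repr (z i)).sum fun l c => (c : ℝ) * s l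
  have hexpand : Continuous expand := continuous_pi fun i =>
    continuous_finsetSum _ fun l _ => continuous_const.mul (continuous_apply l)
  have hz : expand b = z := by
    funext i
    conv_rhs => rw [← b.linearCombination_repr (z i)]
    simp [expand, Finsupp.linearCombination_apply, Rat.smul_def]
  have hb : ⇑b ∈ closure (Set.range (Pi.map fun _ => ((↑) : ℚ → ℝ))) := by
    rw [(DenseRange.piMap fun _ => Rat.denseRange_cast).closure_range]; trivial
  have hmaps : Set.MapsTo expand (Set.range (Pi.map fun _ => ((↑) : ℚ → ℝ)))
      (Set.range fun k : ℝ →ₗ[ℚ] ℚ => fun i => (k (z i) : ℝ)) := by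
    rintro _ ⟨r, rfl⟩
    refine ⟨b.constr ℚ r, funext fun i => ?_⟩
    simp only [expand, Basis.constr_apply, Finsupp.sum, Rat.cast_sum, smul_eq_mul,
      Rat.cast_mul, Pi.map_apply]
  simpa only [hz] using map_mem_closure hexpand hb hmaps

theorem mem_closure_ratRetraction_comp {ι : Type*} (x : ι → ℝ) :
    x ∈ closure {y | ∃ h : ℝ →ₗ[ℚ] ℚ, (∀ q : ℚ, h q = q) ∧ y = fun i => (h (x i) : ℝ)} := by
  obtain ⟨g, hg⟩ := (Algebra.linearMap ℚ ℝ).exists_leftInverse_of_injective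
    (LinearMap.ker_eq_bot.2 (algebraMap ℚ ℝ).injective)
  have hgq : ∀ q : ℚ, g q = q := fun q => by simpa using LinearMap.congr_fun hg q
  -- `π` projects onto `ker g`, and `g + k ∘ₗ π` fixes `ℚ` for every `k`
  let π : ℝ →ₗ[ℚ] ℝ := LinearMap.id - Algebra.linearMap ℚ ℝ ∘ₗ g
  have hx : (fun i => (g (x i) : ℝ) + π (x i)) = x := by
    funext i; simp [π]
  have hmaps : Set.MapsTo (fun w i => (g (x i) : ℝ) + w i)
      (Set.range fun k : ℝ →ₗ[ℚ] ℚ => fun i => (k (π (x i)) : ℝ))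
      {y | ∃ h : ℝ →ₗ[ℚ] ℚ, (∀ q : ℚ, h q = q) ∧ y = fun i => (h (x i) : ℝ)} := by
    rintro _ ⟨k, rfl⟩
    exact ⟨g + k ∘ₗ π, fun q => by simp [π, hgq], funext fun i => by simp⟩
  simpa only [hx] using map_mem_closure (by fun_prop)
    (mem_closure_range_ratLinearMap_comp fun i => π (x i)) hmaps

theorem continuous_ipQ {n : ℕ} (α : Fin n → ℚ) : Continuous (ipQ α) :=
  continuous_finsetSum _ fun i _ => continuous_const.mul (continuous_apply i)

theorem ipQ_ratLinearMap_comp {n : ℕ} (α : Fin n → ℚ) (h : ℝ →ₗ[ℚ] ℚ) (x : Fin n → ℝ) :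
    ipQ α (fun i => (h (x i) : ℝ)) = (h (ipQ α x) : ℝ) := by
  simp [ipQ, ← Rat.smul_def, map_sum]

theorem ipR_eq_ipQ {n : ℕ} (α : Fin n → ℤ) (ω : Fin n → ℝ) :
    ipR α ω = ipQ (fun i => (α i : ℚ)) ω := by
  simp [ipR, ipQ]

def ratPoints (n : ℕ) : Set (Fin n → ℝ) := Set.range fun q : Fin n → ℚ => fun i => (q i : ℝ)

theorem mem_closure_ratPoints_of_ipQ {n : ℕ} {ι κ : Type*} [Finite ι] [Finite κ]
    {a : ι → Fin n → ℚ} {b : ι → ℚ} {c : κ → Fin n → ℚ} {d : κ → ℚ} {x : Fin n → ℝ}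
    (hab : ∀ i, (b i : ℝ) ≤ ipQ (a i) x) (hcd : ∀ j, (d j : ℝ) < ipQ (c j) x) :
    x ∈ closure {y ∈ ratPoints n |
      (∀ i, (b i : ℝ) ≤ ipQ (a i) y) ∧ ∀ j, (d j : ℝ) < ipQ (c j) y} := by
  let slack : Set (Fin n → ℝ) :=
    {y | (∀ i : {i // (b i : ℝ) < ipQ (a i) x}, (b i : ℝ) < ipQ (a i) y) ∧
      ∀ j, (d j : ℝ) < ipQ (c j) y}
  have hslack : IsOpen slack := by
    simp only [slack, Set.ofPred_and, Set.ofPred_forall]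
    exact (isOpen_iInter_of_finite fun i => isOpen_lt continuous_const (continuous_ipQ _)).inter
      (isOpen_iInter_of_finite fun j => isOpen_lt continuous_const (continuous_ipQ _))
  have hx : x ∈ slack := ⟨fun i => i.2, hcd⟩
  refine closure_mono ?_ (hslack.inter_closure ⟨hx, mem_closure_ratRetraction_comp x⟩)
  rintro _ ⟨hy, h, hh, rfl⟩
  refine ⟨⟨_, rfl⟩, fun i => ?_, hy.2⟩
  -- tight constraints are preserved exactly, since `h` fixes the rational right-hand side
  rcases (hab i).lt_or_eq with hlt | heq
  · exact (hy.1 ⟨i, hlt⟩).le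
  · rw [ipQ_ratLinearMap_comp, ← heq, hh]

theorem IsRatPolyhedron.subset_closure_inter_ratPoints {n : ℕ} {P : Set (Fin n → ℝ)}
    (hP : IsRatPolyhedron P) : P ⊆ closure (P ∩ ratPoints n) := by
  obtain ⟨t, a, b, rfl⟩ := hP
  intro x hx
  refine closure_mono ?_
    (mem_closure_ratPoints_of_ipQ (c := Fin.elim0) (d := Fin.elim0) hx fun j => j.elim0)
  rintro y ⟨hy, hab, -⟩
  exact ⟨hab, hy⟩

theorem IsRatHalfOpenCone.subset_closure_inter_ratPoints {n : ℕ} {C : Set (Fin n → ℝ)}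
    (hC : IsRatHalfOpenCone C) : C ⊆ closure (C ∩ ratPoints n) := by
  obtain ⟨d, e, φ, χ, rfl⟩ := hC
  rintro x ⟨hφ, hχ⟩
  simp only [ipR_eq_ipQ] at hφ hχ ⊢
  refine closure_mono ?_
    (mem_closure_ratPoints_of_ipQ (b := 0) (d := 0) (by simpa using hφ) (by simpa using hχ))
  rintro y ⟨hy, hφy, hχy⟩
  exact ⟨by simpa using And.intro hφy hχy, hy⟩

theorem IsRatHalfOpenCone.smul_mem_s14 {n : ℕ} {C : Set (Fin n → ℝ)} (hC : IsRatHalfOpenCone C)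
    {r : ℝ} (hr : 0 < r) {x : Fin n → ℝ} (hx : x ∈ C) : r • x ∈ C := by
  obtain ⟨d, e, φ, χ, rfl⟩ := hC
  have hsmul : ∀ α : Fin n → ℤ, ipR α (r • x) = r * ipR α x := fun α => by
    simp only [ipR, Pi.smul_apply, smul_eq_mul, Finset.mul_sum]
    exact Finset.sum_congr rfl fun i _ => by ring
  exact ⟨fun i => hsmul (φ i) ▸ mul_nonneg hr.le (hx.1 i),
    fun j => hsmul (χ j) ▸ mul_pos hr (hx.2 j)⟩

theorem exists_pos_smul_mem_intLattice {n : ℕ} {y : Fin n → ℝ} (hy : y ∈ ratPoints n) :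
    ∃ N : ℕ, 0 < N ∧ (N : ℝ) • y ∈ intLattice n := by
  obtain ⟨q, rfl⟩ := hy
  refine ⟨∏ i, (q i).den, Finset.prod_pos fun i _ => (q i).pos, ?_⟩
  have hint : ∀ i, ∃ z : ℤ, (z : ℝ) = (∏ i, (q i).den : ℕ) * (q i : ℝ) := fun i => by
    obtain ⟨m, hm⟩ := Finset.dvd_prod_of_mem (fun i => (q i).den) (Finset.mem_univ i)
    have hq : ((m * (q i).num : ℤ) : ℚ) = ((q i).den * m : ℕ) * q i := by
      rw [Int.cast_mul, ← Rat.mul_den_eq_num]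
      push_cast
      ring
    exact ⟨m * (q i).num, by rw [hm]; exact_mod_cast hq⟩
  choose z hz using hint
  exact ⟨z, funext hz⟩

theorem IsConeModel.inter_ratPoints_subset {n : ℕ} {C P : Set (Fin n → ℝ)}
    (hC : IsRatHalfOpenCone C) (hP : IsConeModel C P) : P ∩ ratPoints n ⊆ C := by
  rintro y ⟨hyP, hy⟩
  obtain ⟨N, hN, hNy⟩ := exists_pos_smul_mem_intLattice hy
  have hNpos : (0 : ℝ) < N := Nat.cast_pos.2 hN
  have hNC : (N : ℝ) • y ∈ C := (hP.2.1 ▸ ⟨hP.2.2 N hN y hyP, hNy⟩ : _ ∈ C ∩ intLattice n).1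
  simpa [inv_smul_smul₀ hNpos.ne'] using hC.smul_mem_s14 (inv_pos.2 hNpos) hNC

theorem IsConeModel.inter_ratPoints_subset_of_smul_mem {n : ℕ} {C P B : Set (Fin n → ℝ)}
    (hC : IsRatHalfOpenCone C) (hP : IsConeModel C P) (hPB : P ⊆ B)
    (hB : ∀ l : ℝ, 0 < l → ∀ x ∈ B, l • x ∈ B) : C ∩ ratPoints n ⊆ B := by
  rintro y ⟨hyC, hy⟩
  obtain ⟨N, hN, hNy⟩ := exists_pos_smul_mem_intLattice hy
  have hNpos : (0 : ℝ) < N := Nat.cast_pos.2 hN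
  have hNP : (N : ℝ) • y ∈ P := (hP.2.1 ▸ ⟨hC.smul_mem_s14 hNpos hyC, hNy⟩ : _ ∈ P ∩ intLattice n).1
  simpa [inv_smul_smul₀ hNpos.ne'] using hB _ (inv_pos.2 hNpos) _ (hPB hNP)

theorem closure_is_smallest_closed_cone_containing_model_general {n : ℕ}
    (C P : Set (Fin n → ℝ))
    (hC : IsRatHalfOpenCone C) (hP : IsConeModel C P) :
    P ⊆ closure C ∧
      ∀ B : Set (Fin n → ℝ), IsClosed B → P ⊆ B →
        (∀ l : ℝ, 0 < l → ∀ x ∈ B, l • x ∈ B) → closure C ⊆ B := by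
  refine ⟨fun x hx => ?_, fun B hBc hPB hB => closure_minimal (fun x hx => ?_) hBc⟩
  · exact closure_mono (hP.inter_ratPoints_subset hC) (hP.1.subset_closure_inter_ratPoints hx)
  · exact hBc.closure_subset <| closure_mono (hP.inter_ratPoints_subset_of_smul_mem hC hPB hB)
      (hC.subset_closure_inter_ratPoints hx)

/-- If `P` is a model of a nonempty rational half-open cone `C`, then the
topological closure of `C` is the smallest closed cone containing `P`:
(i) `P ⊆ cl(C)`, and (ii) any closed set `B` with `P ⊆ B` that is stable under
multiplication by positive reals contains `cl(C)`. -/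
theorem closure_is_smallest_closed_cone_containing_model {n : ℕ}
    (C P : Set (Fin n → ℝ))
    (hC : IsRatHalfOpenCone C) (hne : C.Nonempty) (hP : IsConeModel C P) :
    P ⊆ closure C ∧
      ∀ B : Set (Fin n → ℝ), IsClosed B → P ⊆ B →
        (∀ l : ℝ, 0 < l → ∀ x ∈ B, l • x ∈ B) → closure C ⊆ B :=
  closure_is_smallest_closed_cone_containing_model_general C P hC hP
end
end
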